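/- arXiv:2002.01439 — 2 statements merged into one kernel-verified Lean document; each statement's English description precedes it below -/
import Mathlib

section
/- For all (t,s) ∈ [0,1]×[0,1], the kernel satisfies H(t,s) ≤ Φ(s). -/
open MeasureTheory Set Filter

noncomputable def G (α t s : ℝ) : ℝ :=
  if s ≤ t then (t * (1 - s) ^ (α - 1) - (t - s) ^ (α - 1)) / Real.Gamma α
  else t * (1 - s) ^ (α - 1) / Real.Gamma α

noncomputable def Psi (α s : ℝ) : ℝ := (1 - s) ^ (α - 1) / Real.Gamma α

/-- Integral of `f` over `[0,1]` against the finite signed measure `ν`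
(via its Jordan decomposition). -/
noncomputable def stInt (ν : MeasureTheory.SignedMeasure ℝ) (f : ℝ → ℝ) : ℝ :=
  ∫ t in Icc (0:ℝ) 1, f t ∂ν.toJordanDecomposition.posPart
    - ∫ t in Icc (0:ℝ) 1, f t ∂ν.toJordanDecomposition.negPart

noncomputable def gA (α : ℝ) (ν : MeasureTheory.SignedMeasure ℝ) (s : ℝ) : ℝ :=
  stInt ν (fun t => G α t s)

noncomputable def Lam (η μ₀ β : ℝ) (ν : MeasureTheory.SignedMeasure ℝ) : ℝ :=
  μ₀ * η + β * stInt ν (fun t => t)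

noncomputable def Hker (α η μ₀ β : ℝ) (ν : MeasureTheory.SignedMeasure ℝ) (t s : ℝ) : ℝ :=
  β * t / (1 - Lam η μ₀ β ν) * gA α ν s
    + μ₀ * t / (1 - Lam η μ₀ β ν) * G α η s + G α t s

noncomputable def Phi (α η μ₀ β : ℝ) (ν : MeasureTheory.SignedMeasure ℝ) (s : ℝ) : ℝ :=
  β / (1 - Lam η μ₀ β ν) * gA α ν s
    + (μ₀ - Lam η μ₀ β ν + 1) / (1 - Lam η μ₀ β ν) * Psi α s

noncomputable def rho (α η t : ℝ) : ℝ := (η - η ^ (α - 1)) * (t - t ^ (α - 1))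

noncomputable def tau1 (α η μ₀ β : ℝ) (ν : MeasureTheory.SignedMeasure ℝ) : ℝ :=
  ∫ s in Icc (0:ℝ) 1, rho α η s * Phi α η μ₀ β ν s

noncomputable def tau2 (α η μ₀ β : ℝ) (ν : MeasureTheory.SignedMeasure ℝ) : ℝ :=
  ∫ s in Icc (0:ℝ) 1, Phi α η μ₀ β ν s

lemma G_le_Psi {α t s : ℝ} (hα : 2 < α) (ht : t ∈ Icc (0:ℝ) 1) (hs : s ∈ Icc (0:ℝ) 1) :
    G α t s ≤ Psi α s := by
  have hΓ : 0 < Real.Gamma α := Real.Gamma_pos_of_pos (by linarith)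
  have h1s : (0:ℝ) ≤ 1 - s := by linarith [hs.2]
  have hp : 0 ≤ (1 - s) ^ (α - 1) := Real.rpow_nonneg h1s _
  unfold G Psi
  split_ifs with h
  · have hts : 0 ≤ (t - s) ^ (α - 1) := Real.rpow_nonneg (by linarith) _
    have : t * (1 - s) ^ (α - 1) ≤ 1 * (1 - s) ^ (α - 1) :=
      mul_le_mul_of_nonneg_right ht.2 hp
    gcongr
    linarith
  · have : t * (1 - s) ^ (α - 1) ≤ 1 * (1 - s) ^ (α - 1) :=
      mul_le_mul_of_nonneg_right ht.2 hp
    gcongr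
    linarith

lemma G_nonneg {α t s : ℝ} (hα : 2 < α) (ht : t ∈ Icc (0:ℝ) 1) (hs : s ∈ Icc (0:ℝ) 1) :
    0 ≤ G α t s := by
  have hΓ : 0 < Real.Gamma α := Real.Gamma_pos_of_pos (by linarith)
  have h1s : (0:ℝ) ≤ 1 - s := by linarith [hs.2]
  have hp : 0 ≤ (1 - s) ^ (α - 1) := Real.rpow_nonneg h1s _
  unfold G
  split_ifs with h
  · apply div_nonneg _ hΓ.le
    rcases ht.1.eq_or_lt with h0 | h0
    · have hs0 : s = 0 := le_antisymm (h.trans h0.symm.le) hs.1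
      simp [← h0, hs0, Real.zero_rpow (by linarith : α - 1 ≠ 0)]
    · have key : (t - s) ^ (α - 1) ≤ (t * (1 - s)) ^ (α - 1) := by
        apply Real.rpow_le_rpow (by linarith)
        · nlinarith [hs.1, ht.2]
        · linarith
      have hmul : (t * (1 - s)) ^ (α - 1) = t ^ (α - 1) * (1 - s) ^ (α - 1) :=
        Real.mul_rpow ht.1 h1s
      have htt : t ^ (α - 1) ≤ t := by
        calc t ^ (α - 1) ≤ t ^ (1:ℝ) :=
              Real.rpow_le_rpow_of_exponent_ge h0 ht.2 (by linarith)
          _ = t := Real.rpow_one t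
      have : t ^ (α - 1) * (1 - s) ^ (α - 1) ≤ t * (1 - s) ^ (α - 1) :=
        mul_le_mul_of_nonneg_right htt hp
      linarith
  · exact div_nonneg (mul_nonneg ht.1 hp) hΓ.le

/-- Lemma 2.7 (ii), upper bound: `H(t,s) ≤ Φ(s)` on `[0,1] × [0,1]`. -/
theorem Hker_le_Phi (α η μ₀ β : ℝ) (ν : MeasureTheory.SignedMeasure ℝ)
    (hα₁ : 2 < α) (hα₂ : α ≤ 3) (hη : η ∈ Ioo (0:ℝ) 1) (hμ : 0 ≤ μ₀) (hβ : 0 ≤ β)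
    (hΛ₀ : 0 ≤ Lam η μ₀ β ν) (hΛ₁ : Lam η μ₀ β ν < 1)
    (hgA : ∀ s ∈ Icc (0:ℝ) 1, 0 ≤ gA α ν s) :
    ∀ t ∈ Icc (0:ℝ) 1, ∀ s ∈ Icc (0:ℝ) 1, Hker α η μ₀ β ν t s ≤ Phi α η μ₀ β ν s := by
  intro t ht s hs
  have hΓ : 0 < Real.Gamma α := Real.Gamma_pos_of_pos (by linarith)
  set Λ := Lam η μ₀ β ν with hΛdef
  have hD : 0 < 1 - Λ := by linarith
  have hPsi : 0 ≤ Psi α s := div_nonneg (Real.rpow_nonneg (by linarith [hs.2]) _) hΓ.le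
  have hGη : η ∈ Icc (0:ℝ) 1 := ⟨hη.1.le, hη.2.le⟩
  have hGη0 : 0 ≤ G α η s := G_nonneg hα₁ hGη hs
  have hGηP : G α η s ≤ Psi α s := G_le_Psi hα₁ hGη hs
  have hGtP : G α t s ≤ Psi α s := G_le_Psi hα₁ ht hs
  have hg : 0 ≤ gA α ν s := hgA s hs
  have hβt : β * t ≤ β := mul_le_of_le_one_right hβ ht.2
  have hμt : μ₀ * t ≤ μ₀ := mul_le_of_le_one_right hμ ht.2
  have hμt0 : 0 ≤ μ₀ * t := mul_nonneg hμ ht.1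
  have h1 : β * t / (1 - Λ) * gA α ν s ≤ β / (1 - Λ) * gA α ν s := by
    gcongr
  have h2 : μ₀ * t / (1 - Λ) * G α η s ≤ μ₀ / (1 - Λ) * Psi α s := by
    gcongr
  have hid : (μ₀ - Λ + 1) / (1 - Λ) * Psi α s = μ₀ / (1 - Λ) * Psi α s + Psi α s := by
    field_simp
    ring
  simp only [Hker, Phi, ← hΛdef]
  rw [hid]
  linarith
end

section
/- For every real number a > 0, the spectral radius of the operator K_a = a·K satisfies r(K_a) ≥ a·τ₁. -/
open MeasureTheory Set Filter

/-!
The kernel dominates a product, `ρ(t) Φ(s) ≤ H(t,s)`. Hence `K` is a positive operator and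
`K ρ ≥ τ₁ ρ`; iterating, `(aK)ⁿ ρ ≥ (aτ₁)ⁿ ρ`, so evaluating at `η` gives
`‖(aK)ⁿ‖ ≥ (aτ₁)ⁿ ρ(η)` with `ρ(η) > 0`, and taking `n`-th roots yields `r ≥ aτ₁`.
-/

theorem le_of_pow_mul_le_of_tendsto_rpow {c δ r : ℝ} {x : ℕ → ℝ} (hc : 0 ≤ c) (hδ : 0 < δ)
    (hx : ∀ n, c ^ n * δ ≤ x n)
    (hr : Tendsto (fun n : ℕ => x n ^ (1 / (n : ℝ))) atTop (nhds r)) : c ≤ r := by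
  have hroot : ∀ n : ℕ, 1 ≤ n → c * δ ^ (1 / (n : ℝ)) ≤ x n ^ (1 / (n : ℝ)) := by
    intro n hn
    have hn' : (n : ℝ) ≠ 0 := Nat.cast_ne_zero.2 (by omega)
    calc c * δ ^ (1 / (n : ℝ)) = (c ^ n * δ) ^ (1 / (n : ℝ)) := by
          rw [Real.mul_rpow (by positivity) hδ.le, ← Real.rpow_natCast, ← Real.rpow_mul hc,
            mul_one_div_cancel hn', Real.rpow_one]
      _ ≤ x n ^ (1 / (n : ℝ)) := Real.rpow_le_rpow (by positivity) (hx n) (by positivity)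
  have hlim : Tendsto (fun n : ℕ => c * δ ^ (1 / (n : ℝ))) atTop (nhds (c * 1)) := by
    refine tendsto_const_nhds.mul ?_
    simpa [Function.comp_def] using
      (Real.continuousAt_const_rpow hδ.ne').tendsto.comp tendsto_one_div_atTop_nhds_zero_nat
  simpa using le_of_tendsto_of_tendsto hlim hr (eventually_atTop.2 ⟨1, hroot⟩)

theorem ContinuousLinearMap.pow_smul_le_pow_apply {E : Type*} [AddCommGroup E] [Module ℝ E]
    [TopologicalSpace E] [PartialOrder E] [PosSMulMono ℝ E] {T : E →L[ℝ] E} (hT : Monotone T)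
    {c : ℝ} (hc : 0 ≤ c) {u : E} (hu : c • u ≤ T u) (n : ℕ) : c ^ n • u ≤ (T ^ n) u := by
  induction n with
  | zero => simp
  | succ n ih =>
    calc c ^ (n + 1) • u = c ^ n • c • u := by rw [pow_succ, mul_smul]
      _ ≤ c ^ n • T u := smul_le_smul_of_nonneg_left hu (pow_nonneg hc n)
      _ = T (c ^ n • u) := (map_smul T _ _).symm
      _ ≤ T ((T ^ n) u) := hT ih
      _ = (T ^ (n + 1)) u := by rw [pow_succ']; rfl

theorem ContinuousMap.le_of_smul_le_of_tendsto_norm_pow_rpow {X : Type*} [TopologicalSpace X]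
    [CompactSpace X] {T : C(X, ℝ) →L[ℝ] C(X, ℝ)} (hT : Monotone T) {c r : ℝ} (hc : 0 ≤ c)
    {u : C(X, ℝ)} (hu : c • u ≤ T u) {x : X} (hux : 0 < u x)
    (hr : Tendsto (fun n : ℕ => ‖T ^ n‖ ^ (1 / (n : ℝ))) atTop (nhds r)) : c ≤ r := by
  have hu_norm : 0 < ‖u‖ := hux.trans_le ((Real.le_norm_self _).trans (u.norm_coe_le_norm x))
  refine le_of_pow_mul_le_of_tendsto_rpow hc (div_pos hux hu_norm) (fun n => ?_) hr
  rw [← mul_div_assoc, div_le_iff₀ hu_norm]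
  calc c ^ n * u x = (c ^ n • u) x := rfl
    _ ≤ (T ^ n) u x := T.pow_smul_le_pow_apply hT hc hu n x
    _ ≤ ‖(T ^ n) u‖ := (Real.le_norm_self _).trans (norm_coe_le_norm _ x)
    _ ≤ ‖T ^ n‖ * ‖u‖ := (T ^ n).le_opNorm u

theorem monotone_of_integral_kernel_nonneg {k : ℝ → ℝ → ℝ}
    (hk : ∀ t ∈ Icc (0:ℝ) 1, ∀ s ∈ Icc (0:ℝ) 1, 0 ≤ k t s)
    {K : C(Icc (0:ℝ) 1, ℝ) →L[ℝ] C(Icc (0:ℝ) 1, ℝ)}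
    (hK : ∀ u : C(Icc (0:ℝ) 1, ℝ), ∀ t : Icc (0:ℝ) 1,
      K u t = ∫ s in Icc (0:ℝ) 1, k t s * u (projIcc 0 1 zero_le_one s)) :
    Monotone K := by
  intro u v huv t
  have : 0 ≤ K (v - u) t := by
    rw [hK]
    exact setIntegral_nonneg measurableSet_Icc fun s hs =>
      mul_nonneg (hk t t.2 s hs) (sub_nonneg.2 (huv _))
  simpa using this

theorem integrableOn_setIntegral_of_abs_le {f : ℝ → ℝ → ℝ}
    (hf : Measurable (Function.uncurry f)) {A B : Set ℝ} (hB : MeasurableSet B)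
    (hB_finite : volume B ≠ ⊤) {C : ℝ} (hC : ∀ t ∈ A, ∀ s ∈ B, |f t s| ≤ C)
    (μ : Measure ℝ) [IsFiniteMeasure μ] :
    IntegrableOn (fun s => ∫ t in A, f t s ∂μ) B := by
  refine Measure.integrableOn_of_bounded (M := C * μ.real A) hB_finite ?_ ?_
  · exact (StronglyMeasurable.integral_prod_right (f := fun s t => f t s) (ν := μ.restrict A)
      (hf.comp measurable_swap).stronglyMeasurable).aestronglyMeasurable
  · filter_upwards [ae_restrict_mem hB] with s hs
    exact norm_setIntegral_le_of_norm_le_const (measure_lt_top _ _) fun t ht => hC t ht s hs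

theorem integrableOn_stInt_of_abs_le {f : ℝ → ℝ → ℝ} (hf : Measurable (Function.uncurry f))
    {C : ℝ} (hC : ∀ t ∈ Icc (0:ℝ) 1, ∀ s ∈ Icc (0:ℝ) 1, |f t s| ≤ C) (ν : SignedMeasure ℝ) :
    IntegrableOn (fun s => stInt ν (fun t => f t s)) (Icc 0 1) :=
  (integrableOn_setIntegral_of_abs_le hf measurableSet_Icc measure_Icc_lt_top.ne hC _).sub
    (integrableOn_setIntegral_of_abs_le hf measurableSet_Icc measure_Icc_lt_top.ne hC _)

section GreenFunction

variable {α t s : ℝ}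

theorem Psi_nonneg (hα : 0 < α) (hs : s ≤ 1) : 0 ≤ Psi α s :=
  div_nonneg (Real.rpow_nonneg (by linarith) _) (Real.Gamma_pos_of_pos hα).le

theorem measurable_G_uncurry : Measurable (Function.uncurry (G α)) := by
  unfold G
  refine Measurable.ite (measurableSet_le measurable_snd measurable_fst) ?_ ?_ <;> fun_prop

theorem abs_G_le (hα : 1 ≤ α) (ht : t ∈ Icc (0:ℝ) 1) (hs : s ∈ Icc (0:ℝ) 1) :
    |G α t s| ≤ 2 / Real.Gamma α := by
  obtain ⟨ht0, ht1⟩ := ht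
  obtain ⟨hs0, hs1⟩ := hs
  have hΓ : 0 < Real.Gamma α := Real.Gamma_pos_of_pos (by linarith)
  have h1 : (1 - s) ^ (α - 1) ≤ 1 := Real.rpow_le_one (by linarith) (by linarith) (by linarith)
  have h1' : 0 ≤ (1 - s) ^ (α - 1) := Real.rpow_nonneg (by linarith) _
  unfold G
  split_ifs with h
  · rw [abs_div, abs_of_pos hΓ, div_le_div_iff_of_pos_right hΓ, abs_le]
    have h2 : (t - s) ^ (α - 1) ≤ 1 := Real.rpow_le_one (by linarith) (by linarith) (by linarith)
    have h2' : 0 ≤ (t - s) ^ (α - 1) := Real.rpow_nonneg (by linarith) _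
    constructor <;> nlinarith
  · rw [abs_div, abs_of_pos hΓ, div_le_div_iff_of_pos_right hΓ, abs_le]
    constructor <;> nlinarith

theorem integrableOn_G (hα : 1 ≤ α) (ht : t ∈ Icc (0:ℝ) 1) : IntegrableOn (G α t) (Icc 0 1) :=
  Measure.integrableOn_of_bounded (M := 2 / Real.Gamma α) measure_Icc_lt_top.ne
    (measurable_G_uncurry.comp measurable_prodMk_left).aestronglyMeasurable
    ((ae_restrict_mem measurableSet_Icc).mono fun _ hs => abs_G_le hα ht hs)

theorem integrableOn_gA (hα : 1 ≤ α) (ν : SignedMeasure ℝ) : IntegrableOn (gA α ν) (Icc 0 1) :=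
  integrableOn_stInt_of_abs_le measurable_G_uncurry (fun _ ht _ hs => abs_G_le hα ht hs) ν

/-- For `s ≤ t` this is `(t - s) ^ (α - 1) ≤ (t (1 - s)) ^ (α - 1)`. -/
theorem sub_rpow_mul_Psi_le_G (hα : 1 ≤ α) (ht : t ∈ Icc (0:ℝ) 1) (hs : s ∈ Icc (0:ℝ) 1) :
    (t - t ^ (α - 1)) * Psi α s ≤ G α t s := by
  obtain ⟨ht0, ht1⟩ := ht
  obtain ⟨hs0, hs1⟩ := hs
  have hΓ : 0 < Real.Gamma α := Real.Gamma_pos_of_pos (by linarith)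
  have hts : 0 ≤ t ^ (α - 1) * (1 - s) ^ (α - 1) :=
    mul_nonneg (Real.rpow_nonneg ht0 _) (Real.rpow_nonneg (by linarith) _)
  unfold G Psi
  rw [mul_div_assoc']
  split_ifs with h
  · rw [div_le_div_iff_of_pos_right hΓ]
    have key : (t - s) ^ (α - 1) ≤ t ^ (α - 1) * (1 - s) ^ (α - 1) := by
      rw [← Real.mul_rpow ht0 (by linarith)]
      exact Real.rpow_le_rpow (by linarith) (by nlinarith) (by linarith)
    linarith
  · rw [div_le_div_iff_of_pos_right hΓ]
    linarith

end GreenFunction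

section KernelBound

variable {α η μ₀ β t s : ℝ} {ν : SignedMeasure ℝ}

theorem continuous_rho (hα : 1 ≤ α) : Continuous (rho α η) :=
  continuous_const.mul (continuous_id.sub (Real.continuous_rpow_const (by linarith)))

theorem sub_rpow_nonneg (hα : 2 ≤ α) (ht : t ∈ Icc (0:ℝ) 1) : 0 ≤ t - t ^ (α - 1) :=
  sub_nonneg.2 (Real.rpow_le_self_of_le_one ht.1 ht.2 (by linarith))

theorem sub_rpow_le_one (ht : t ∈ Icc (0:ℝ) 1) : t - t ^ (α - 1) ≤ 1 := by
  linarith [Real.rpow_nonneg ht.1 (α - 1), ht.2]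

theorem rho_nonneg (hα : 2 ≤ α) (hη : η ∈ Icc (0:ℝ) 1) (ht : t ∈ Icc (0:ℝ) 1) :
    0 ≤ rho α η t :=
  mul_nonneg (sub_rpow_nonneg hα hη) (sub_rpow_nonneg hα ht)

theorem rho_self_pos (hα : 2 < α) (hη : η ∈ Ioo (0:ℝ) 1) : 0 < rho α η η := by
  have : 0 < η - η ^ (α - 1) := sub_pos.2 (Real.rpow_lt_self_of_lt_one hη.1 hη.2 (by linarith))
  exact mul_pos this this

theorem Phi_nonneg (hα : 0 < α) (hμ : 0 ≤ μ₀) (hβ : 0 ≤ β) (hΛ : Lam η μ₀ β ν < 1)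
    (hgA : 0 ≤ gA α ν s) (hs : s ≤ 1) : 0 ≤ Phi α η μ₀ β ν s := by
  have hL : 0 < 1 - Lam η μ₀ β ν := by linarith
  exact add_nonneg (mul_nonneg (div_nonneg hβ hL.le) hgA)
    (mul_nonneg (div_nonneg (by linarith) hL.le) (Psi_nonneg hα hs))

theorem rho_mul_Phi_le_Hker (hα : 2 ≤ α) (hη : η ∈ Icc (0:ℝ) 1) (hμ : 0 ≤ μ₀) (hβ : 0 ≤ β)
    (hΛ : Lam η μ₀ β ν < 1) (hgA : 0 ≤ gA α ν s) (ht : t ∈ Icc (0:ℝ) 1)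
    (hs : s ∈ Icc (0:ℝ) 1) : rho α η t * Phi α η μ₀ β ν s ≤ Hker α η μ₀ β ν t s := by
  set L := Lam η μ₀ β ν
  set c := η - η ^ (α - 1)
  set d := t - t ^ (α - 1)
  have hL : 0 < 1 - L := by linarith
  have hc0 : 0 ≤ c := sub_rpow_nonneg hα hη
  have hd0 : 0 ≤ d := sub_rpow_nonneg hα ht
  have hdt : d ≤ t := by linarith [Real.rpow_nonneg ht.1 (α - 1)]
  have hΨ : 0 ≤ Psi α s := Psi_nonneg (by linarith) hs.2
  have hg : 0 ≤ β / (1 - L) * gA α ν s := mul_nonneg (div_nonneg hβ hL.le) hgA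
  have h1 : c * d * (β / (1 - L) * gA α ν s) ≤ t * (β / (1 - L) * gA α ν s) :=
    mul_le_mul_of_nonneg_right ((mul_le_of_le_one_left hd0 (sub_rpow_le_one hη)).trans hdt) hg
  have h2 : μ₀ / (1 - L) * d * (c * Psi α s) ≤ μ₀ / (1 - L) * t * G α η s :=
    mul_le_mul (mul_le_mul_of_nonneg_left hdt (div_nonneg hμ hL.le))
      (sub_rpow_mul_Psi_le_G (by linarith) hη hs) (mul_nonneg hc0 hΨ)
      (mul_nonneg (div_nonneg hμ hL.le) ht.1)
  have h3 : c * (d * Psi α s) ≤ G α t s :=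
    (mul_le_of_le_one_left (mul_nonneg hd0 hΨ) (sub_rpow_le_one hη)).trans
      (sub_rpow_mul_Psi_le_G (by linarith) ht hs)
  have hcoef : (μ₀ - L + 1) / (1 - L) = μ₀ / (1 - L) + 1 := by field_simp; ring
  calc rho α η t * Phi α η μ₀ β ν s
      = c * d * (β / (1 - L) * gA α ν s) + μ₀ / (1 - L) * d * (c * Psi α s)
        + c * (d * Psi α s) := by unfold rho Phi; rw [hcoef]; ring
    _ ≤ t * (β / (1 - L) * gA α ν s) + μ₀ / (1 - L) * t * G α η s + G α t s := by gcongr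
    _ = Hker α η μ₀ β ν t s := by unfold Hker; ring

theorem integrableOn_Hker (hα : 1 ≤ α) (hη : η ∈ Icc (0:ℝ) 1) (ht : t ∈ Icc (0:ℝ) 1) :
    IntegrableOn (Hker α η μ₀ β ν t) (Icc 0 1) :=
  (((integrableOn_gA hα ν).const_mul _).add ((integrableOn_G hα hη).const_mul _)).add
    (integrableOn_G hα ht)

theorem tau1_nonneg (hα : 2 ≤ α) (hη : η ∈ Icc (0:ℝ) 1) (hμ : 0 ≤ μ₀) (hβ : 0 ≤ β)
    (hΛ : Lam η μ₀ β ν < 1) (hgA : ∀ s ∈ Icc (0:ℝ) 1, 0 ≤ gA α ν s) :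
    0 ≤ tau1 α η μ₀ β ν :=
  setIntegral_nonneg measurableSet_Icc fun s hs =>
    mul_nonneg (rho_nonneg hα hη hs)
      (Phi_nonneg (by linarith) hμ hβ hΛ (hgA s hs) hs.2)

theorem tau1_mul_rho_le_integral_Hker_mul_rho (hα : 2 ≤ α) (hη : η ∈ Icc (0:ℝ) 1)
    (hμ : 0 ≤ μ₀) (hβ : 0 ≤ β) (hΛ : Lam η μ₀ β ν < 1)
    (hgA : ∀ s ∈ Icc (0:ℝ) 1, 0 ≤ gA α ν s) (ht : t ∈ Icc (0:ℝ) 1) :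
    tau1 α η μ₀ β ν * rho α η t ≤
      ∫ s in Icc (0:ℝ) 1, Hker α η μ₀ β ν t s * rho α η (projIcc 0 1 zero_le_one s) := by
  have hint : IntegrableOn (fun s => Hker α η μ₀ β ν t s * rho α η (projIcc 0 1 zero_le_one s))
      (Icc 0 1) :=
    (integrableOn_Hker (by linarith) hη ht).mul_continuousOn
      ((continuous_rho (by linarith)).comp
        (continuous_subtype_val.comp continuous_projIcc)).continuousOn isCompact_Icc
  rw [tau1, mul_comm, ← integral_const_mul]
  refine integral_mono_of_nonneg ?_ hint ?_ <;>
    filter_upwards [ae_restrict_mem measurableSet_Icc] with s hs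
  · have hΦ := Phi_nonneg (by linarith) hμ hβ hΛ (hgA s hs) hs.2
    have := rho_nonneg hα hη ht
    have := rho_nonneg hα hη hs
    positivity
  · rw [projIcc_of_mem _ hs]
    calc rho α η t * (rho α η s * Phi α η μ₀ β ν s)
        = rho α η t * Phi α η μ₀ β ν s * rho α η s := by ring
      _ ≤ Hker α η μ₀ β ν t s * rho α η s :=
        mul_le_mul_of_nonneg_right (rho_mul_Phi_le_Hker hα hη hμ hβ hΛ (hgA s hs) ht hs)
          (rho_nonneg hα hη hs)

end KernelBound

theorem spectralRadius_ge_general (α η μ₀ β : ℝ) (ν : MeasureTheory.SignedMeasure ℝ)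
    (hα₁ : 2 < α) (hη : η ∈ Ioo (0:ℝ) 1) (hμ : 0 ≤ μ₀) (hβ : 0 ≤ β)
    (hΛ₁ : Lam η μ₀ β ν < 1)
    (hgA : ∀ s ∈ Icc (0:ℝ) 1, 0 ≤ gA α ν s)
    (K : C(Icc (0:ℝ) 1, ℝ) →L[ℝ] C(Icc (0:ℝ) 1, ℝ))
    (hK : ∀ u : C(Icc (0:ℝ) 1, ℝ), ∀ t : Icc (0:ℝ) 1,
      K u t = ∫ s in Icc (0:ℝ) 1, Hker α η μ₀ β ν t s * u (projIcc 0 1 zero_le_one s))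
    (a : ℝ) (ha : 0 < a) (r : ℝ)
    (hr : Tendsto (fun n : ℕ => ‖(a • K) ^ n‖ ^ (1 / (n:ℝ))) atTop (nhds r)) :
    a * tau1 α η μ₀ β ν ≤ r := by
  have hη' : η ∈ Icc (0:ℝ) 1 := Ioo_subset_Icc_self hη
  let u : C(Icc (0:ℝ) 1, ℝ) :=
    ⟨fun t => rho α η t, (continuous_rho (by linarith)).comp continuous_subtype_val⟩
  have hK_mono : Monotone K := monotone_of_integral_kernel_nonneg (fun t ht s hs =>
    (mul_nonneg (rho_nonneg hα₁.le hη' ht)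
      (Phi_nonneg (by linarith) hμ hβ hΛ₁ (hgA s hs) hs.2)).trans
      (rho_mul_Phi_le_Hker hα₁.le hη' hμ hβ hΛ₁ (hgA s hs) ht hs)) hK
  have hKu : tau1 α η μ₀ β ν • u ≤ K u := fun t => by
    change tau1 α η μ₀ β ν * rho α η t ≤ K u t
    rw [hK]
    exact tau1_mul_rho_le_integral_Hker_mul_rho hα₁.le hη' hμ hβ hΛ₁ hgA t.2
  refine ContinuousMap.le_of_smul_le_of_tendsto_norm_pow_rpow (u := u) (x := ⟨η, hη'⟩)
    (fun v w hvw => smul_le_smul_of_nonneg_left (hK_mono hvw) ha.le)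
    (mul_nonneg ha.le (tau1_nonneg hα₁.le hη' hμ hβ hΛ₁ hgA)) ?_ (rho_self_pos hα₁ hη) hr
  rw [mul_smul]
  exact smul_le_smul_of_nonneg_left hKu ha.le

/-- Lemma 2.8, lower bound: the spectral radius (given by Gelfand's formula
`r(K_a) = lim ‖K_aⁿ‖^(1/n)`) of `K_a = a·K` satisfies `r(K_a) ≥ a·τ₁`. -/
theorem spectralRadius_ge (α η μ₀ β : ℝ) (ν : MeasureTheory.SignedMeasure ℝ)
    (hα₁ : 2 < α) (hα₂ : α ≤ 3) (hη : η ∈ Ioo (0:ℝ) 1) (hμ : 0 ≤ μ₀) (hβ : 0 ≤ β)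
    (hΛ₀ : 0 ≤ Lam η μ₀ β ν) (hΛ₁ : Lam η μ₀ β ν < 1)
    (hgA : ∀ s ∈ Icc (0:ℝ) 1, 0 ≤ gA α ν s)
    (K : C(Icc (0:ℝ) 1, ℝ) →L[ℝ] C(Icc (0:ℝ) 1, ℝ))
    (hK : ∀ u : C(Icc (0:ℝ) 1, ℝ), ∀ t : Icc (0:ℝ) 1,
      K u t = ∫ s in Icc (0:ℝ) 1, Hker α η μ₀ β ν t s * u (projIcc 0 1 zero_le_one s))
    (a : ℝ) (ha : 0 < a) (r : ℝ)
    (hr : Tendsto (fun n : ℕ => ‖(a • K) ^ n‖ ^ (1 / (n:ℝ))) atTop (nhds r)) :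
    a * tau1 α η μ₀ β ν ≤ r :=
  spectralRadius_ge_general α η μ₀ β ν hα₁ hη hμ hβ hΛ₁ hgA K hK a ha r hr
end
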